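/- arXiv:2603.18367 — 4 statements merged into one kernel-verified Lean document; each statement's English description precedes it below -/
import Mathlib

section
/- Let h : ℝ≥0 → [h', τ] be Borel measurable with 0 < h' ≤ τ, and suppose there is a constant h* such that for all sufficiently small Δ > 0 and all s ≥ -τ, the Lebesgue measure of the set I_{s,Δ} = {t ≥ 0 : t - h(t) ∈ [s, s+Δ)} is at most h* · Δ. Then for every continuous nonnegative function φ : [-τ, T - h'] → ℝ≥0 with T > h', one has ∫₀^T φ(t - h(t)) dt ≤ h* · ∫_{-τ}^{T - h'} φ(t) dt. -/
open MeasureTheory Set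
open scoped ENNReal NNReal

private lemma ennreal_mul_iInf {ι : Sort*} {c : ℝ≥0∞} (hc0 : c ≠ 0) (hc : c ≠ ⊤)
    (f : ι → ℝ≥0∞) : c * ⨅ i, f i = ⨅ i, c * f i :=
  ENNReal.mul_iInf' (fun h => absurd h hc) (fun h => absurd h hc0)

private lemma floor_piece {δ s x : ℝ} (hδ : 0 < δ) (hx : s ≤ x) {n : ℕ}
    (hxn : x < s + n * δ) :
    ∃ i : ℕ, i < n ∧ s + i * δ ≤ x ∧ x < s + (i + 1) * δ := by
  set y := (x - s) / δ with hy
  have hy0 : (0:ℤ) ≤ ⌊y⌋ := Int.floor_nonneg.2 (div_nonneg (by linarith) hδ.le)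
  have hcast : ((⌊y⌋.toNat : ℕ) : ℝ) = ((⌊y⌋ : ℤ) : ℝ) := by
    exact_mod_cast congrArg (fun z : ℤ => (z : ℝ)) (Int.toNat_of_nonneg hy0)
  have h1 : ((⌊y⌋.toNat : ℕ) : ℝ) ≤ y := by rw [hcast]; exact Int.floor_le y
  have h2 : y < ((⌊y⌋.toNat : ℕ) : ℝ) + 1 := by rw [hcast]; exact Int.lt_floor_add_one y
  have hyn : y < n := by rw [hy, div_lt_iff₀ hδ]; linarith
  refine ⟨⌊y⌋.toNat, ?_, ?_, ?_⟩
  · exact_mod_cast lt_of_le_of_lt h1 hyn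
  · have := (le_div_iff₀ hδ).1 h1
    linarith
  · have := (div_lt_iff₀ hδ).1 h2
    linarith

/-- Delay-substitution lemma: if the delay function `h` takes values in `[h', τ]` and the
Lebesgue measure of `I_{s,Δ} = {t ≥ 0 : t - h t ∈ [s, s+Δ)}` is at most `hstar * Δ` for all
sufficiently small `Δ > 0` and all `s ≥ -τ`, then
`∫₀^T φ(t - h t) dt ≤ hstar * ∫_{-τ}^{T-h'} φ(t) dt` for continuous nonnegative `φ`. -/
theorem delay_substitution
    (h' τ hstar T : ℝ) (h : ℝ → ℝ)
    (hh' : 0 < h') (hτ : h' ≤ τ)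
    (hmeas : Measurable h)
    (hrange : ∀ t, h t ∈ Set.Icc h' τ)
    (hbound : ∃ Δ₀ > 0, ∀ Δ : ℝ, 0 < Δ → Δ < Δ₀ → ∀ s : ℝ, -τ ≤ s →
      volume {t : ℝ | 0 ≤ t ∧ s ≤ t - h t ∧ t - h t < s + Δ} ≤ ENNReal.ofReal (hstar * Δ))
    (φ : ℝ → ℝ)
    (hφcont : ContinuousOn φ (Set.Icc (-τ) (T - h')))
    (hφnonneg : ∀ t ∈ Set.Icc (-τ) (T - h'), 0 ≤ φ t)
    (hT : h' < T) :
    ∫ t in (0:ℝ)..T, φ (t - h t) ≤ hstar * ∫ t in (-τ)..(T - h'), φ t := by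
  obtain ⟨Δ₀, hΔ₀, hb⟩ := hbound
  have hτ0 : 0 < τ := hh'.trans_le hτ
  set a := -τ with ha
  set b := T - h' with hbdef
  have hab : a < b := by rw [ha, hbdef]; linarith
  set g : ℝ → ℝ := fun t => t - h t with hg
  have hgm : Measurable g := measurable_id.sub hmeas
  set ν : Measure ℝ := Measure.map g (volume.restrict (Ioc 0 T)) with hν
  have hνapp : ∀ A : Set ℝ, MeasurableSet A → ν A = volume (g ⁻¹' A ∩ Ioc 0 T) := by
    intro A hA
    rw [hν, Measure.map_apply hgm hA, Measure.restrict_apply (hgm hA)]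
  -- Step 1: hstar is positive
  have hstar_pos : 0 < hstar := by
    by_contra hcon
    push_neg at hcon
    set Δ := Δ₀ / 2 with hΔ
    have hΔpos : 0 < Δ := half_pos hΔ₀
    have hΔlt : Δ < Δ₀ := half_lt_self hΔ₀
    obtain ⟨n, hn⟩ := exists_nat_gt ((τ + 1) / Δ)
    have hnΔ : τ + 1 < n * Δ := by rw [div_lt_iff₀ hΔpos] at hn; linarith
    have hsub : Icc τ (n * Δ) ⊆ ⋃ i ∈ Finset.range n,
        {t : ℝ | 0 ≤ t ∧ (i:ℝ) * Δ ≤ t - h t ∧ t - h t < (i:ℝ) * Δ + Δ} := by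
      intro t ht
      obtain ⟨ht1, ht2⟩ := ht
      obtain ⟨hr1, hr2⟩ := hrange t
      have hx0 : (0:ℝ) ≤ t - h t := by linarith
      have hxn : t - h t < 0 + n * Δ := by linarith
      obtain ⟨i, hin, hi1, hi2⟩ := floor_piece hΔpos hx0 hxn
      refine mem_iUnion₂.2 ⟨i, Finset.mem_range.2 hin, ?_, ?_, ?_⟩
      · linarith
      · linarith
      · linarith
    have hle0 : volume (Icc τ (n * Δ)) ≤ ∑ i ∈ Finset.range n,
        volume {t : ℝ | 0 ≤ t ∧ (i:ℝ) * Δ ≤ t - h t ∧ t - h t < (i:ℝ) * Δ + Δ} :=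
      (measure_mono hsub).trans (measure_biUnion_finset_le _ _)
    have hzero : ∀ i ∈ Finset.range n,
        volume {t : ℝ | 0 ≤ t ∧ (i:ℝ) * Δ ≤ t - h t ∧ t - h t < (i:ℝ) * Δ + Δ} = 0 := by
      intro i _
      have hiΔ : (0:ℝ) ≤ (i:ℝ) * Δ := mul_nonneg (Nat.cast_nonneg i) hΔpos.le
      have hkey := hb Δ hΔpos hΔlt ((i:ℝ) * Δ) (by linarith)
      have h0 : ENNReal.ofReal (hstar * Δ) = 0 := by
        rw [ENNReal.ofReal_eq_zero]; nlinarith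
      exact le_antisymm (h0 ▸ hkey) (zero_le)
    rw [Finset.sum_eq_zero hzero] at hle0
    have hvz : volume (Icc τ (n * Δ)) = 0 := le_antisymm hle0 (zero_le)
    rw [Real.volume_Icc] at hvz
    have := ENNReal.ofReal_eq_zero.1 hvz
    linarith
  set c : ℝ≥0∞ := ENNReal.ofReal hstar with hcdef
  have hc0 : c ≠ 0 := (ENNReal.ofReal_pos.2 hstar_pos).ne'
  have hcT : c ≠ ⊤ := ENNReal.ofReal_ne_top
  -- Step 2: ν of half-open intervals
  have hIco : ∀ s u : ℝ, a ≤ s → ν (Ico s u) ≤ c * ENNReal.ofReal (u - s) := by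
    intro s u hs
    rcases le_or_gt u s with hus | hsu
    · rw [Ico_eq_empty (not_lt.2 hus)]; simp
    · obtain ⟨n, hn⟩ := exists_nat_gt ((u - s) / Δ₀)
      have hn0 : 0 < (n:ℝ) := lt_of_le_of_lt (div_nonneg (by linarith) hΔ₀.le) hn
      set δ := (u - s) / n with hδdef
      have hδpos : 0 < δ := div_pos (by linarith) hn0
      have hnδ : (n:ℝ) * δ = u - s := by rw [hδdef]; field_simp
      have hδΔ : δ < Δ₀ := by
        rw [hδdef, div_lt_iff₀ hn0]
        rw [div_lt_iff₀ hΔ₀] at hn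
        linarith
      have hcover : Ico s u ⊆ ⋃ i ∈ Finset.range n, Ico (s + i * δ) (s + i * δ + δ) := by
        intro x hx
        have hxn : x < s + n * δ := by rw [hnδ]; linarith [hx.2]
        obtain ⟨i, hin, h1, h2⟩ := floor_piece hδpos hx.1 hxn
        refine mem_iUnion₂.2 ⟨i, Finset.mem_range.2 hin, h1, ?_⟩
        have : ((i:ℝ) + 1) * δ = (i:ℝ) * δ + δ := by ring
        linarith
      have hpiece : ∀ i : ℕ, ν (Ico (s + i * δ) (s + i * δ + δ)) ≤ ENNReal.ofReal (hstar * δ) := by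
        intro i
        rw [hνapp _ measurableSet_Ico]
        have hiδ : (0:ℝ) ≤ (i:ℝ) * δ := mul_nonneg (Nat.cast_nonneg i) hδpos.le
        refine le_trans (measure_mono ?_) (hb δ hδpos hδΔ (s + i * δ) (by rw [ha] at hs ⊢; linarith))
        rintro t ⟨⟨hg1, hg2⟩, ht0, htT⟩
        exact ⟨ht0.le, hg1, hg2⟩
      calc ν (Ico s u) ≤ ∑ i ∈ Finset.range n, ν (Ico (s + i * δ) (s + i * δ + δ)) :=
            (measure_mono hcover).trans (measure_biUnion_finset_le _ _)
        _ ≤ ∑ _i ∈ Finset.range n, ENNReal.ofReal (hstar * δ) :=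
            Finset.sum_le_sum fun i _ => hpiece i
        _ = (n : ℝ≥0∞) * ENNReal.ofReal (hstar * δ) := by
            rw [Finset.sum_const, Finset.card_range, nsmul_eq_mul]
        _ = ENNReal.ofReal ((n:ℝ) * (hstar * δ)) := by
            rw [ENNReal.ofReal_mul (Nat.cast_nonneg n), ENNReal.ofReal_natCast]
        _ = ENNReal.ofReal (hstar * (u - s)) := by rw [← hnδ]; ring_nf
        _ = c * ENNReal.ofReal (u - s) := ENNReal.ofReal_mul hstar_pos.le
  -- Step 3: ν of Ioc intervals
  have hνIoc : ∀ p q : ℝ, ν (Ioc p q) ≤ c * ENNReal.ofReal (q - p) := by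
    intro p q
    rcases le_or_gt q p with hqp | hpq
    · rw [Ioc_eq_empty (not_lt.2 hqp)]; simp
    · refine ENNReal.le_of_forall_pos_le_add fun ε hε _ => ?_
      set δ : ℝ := (ε : ℝ) / hstar with hδdef
      have hεpos : (0:ℝ) < (ε:ℝ) := by exact_mod_cast hε
      have hδpos : 0 < δ := div_pos hεpos hstar_pos
      set m := max p a with hm
      have step : ν (Ioc p q) ≤ ν (Ico m (q + δ)) := by
        rw [hνapp _ measurableSet_Ioc, hνapp _ measurableSet_Ico]
        apply measure_mono
        rintro t ⟨⟨hg1, hg2⟩, ht0, htT⟩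
        refine ⟨⟨max_le hg1.le ?_, ?_⟩, ht0, htT⟩
        · show a ≤ t - h t
          have h2 := (hrange t).2
          rw [ha]; linarith
        · show t - h t < q + δ
          have : t - h t ≤ q := hg2
          linarith
      have step2 : ν (Ico m (q + δ)) ≤ c * ENNReal.ofReal (q + δ - m) :=
        hIco m (q + δ) (le_max_right p a)
      have step3 : c * ENNReal.ofReal (q + δ - m) ≤ c * ENNReal.ofReal (q - p + δ) := by
        refine mul_le_mul_right (ENNReal.ofReal_le_ofReal ?_) c
        have : p ≤ m := le_max_left p a
        linarith
      have step4 : ENNReal.ofReal (q - p + δ) = ENNReal.ofReal (q - p) + ENNReal.ofReal δ :=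
        ENNReal.ofReal_add (by linarith) hδpos.le
      have step5 : c * ENNReal.ofReal δ = (ε : ℝ≥0∞) := by
        rw [hcdef, ← ENNReal.ofReal_mul hstar_pos.le]
        have : hstar * δ = (ε : ℝ) := by
          rw [hδdef]; field_simp
        rw [this, ENNReal.ofReal_coe_nnreal]
      calc ν (Ioc p q) ≤ c * ENNReal.ofReal (q - p + δ) :=
            step.trans (step2.trans step3)
        _ = c * ENNReal.ofReal (q - p) + c * ENNReal.ofReal δ := by rw [step4, mul_add]
        _ = c * ENNReal.ofReal (q - p) + (ε : ℝ≥0∞) := by rw [step5]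
  -- Step 4: ν A ≤ c * volume A for every set A
  have hlen : ∀ s : Set ℝ, StieltjesFunction.id.length s
      = ⨅ (p : ℝ) (q : ℝ) (_ : s ⊆ Ioc p q), ENNReal.ofReal (q - p) := by
    intro s; rw [StieltjesFunction.length]
    have hbot : (botSet : Set ℝ) = ∅ := Set.eq_empty_of_forall_notMem fun x hx => by
      have : x ≤ x - 1 := hx (x - 1)
      linarith
    simp [hbot]
  have key_len : ∀ s : Set ℝ, ν s ≤ c * StieltjesFunction.id.length s := by
    intro s
    rw [hlen s, ennreal_mul_iInf hc0 hcT]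
    refine le_iInf fun p => ?_
    rw [ennreal_mul_iInf hc0 hcT]
    refine le_iInf fun q => ?_
    rw [ennreal_mul_iInf hc0 hcT]
    refine le_iInf fun hsub => ?_
    exact (measure_mono hsub).trans (hνIoc p q)
  have hset : ∀ A : Set ℝ, ν A ≤ c * volume A := by
    intro A
    have hvol : volume A = ⨅ (t : ℕ → Set ℝ) (_ : A ⊆ ⋃ i, t i),
        ∑' n, StieltjesFunction.id.length (t n) := by
      rw [Real.volume_val, StieltjesFunction.measure]
      show StieltjesFunction.id.outer A = _
      rw [StieltjesFunction.outer, OuterMeasure.ofFunction_apply]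
    rw [hvol, ennreal_mul_iInf hc0 hcT]
    refine le_iInf fun t => ?_
    rw [ennreal_mul_iInf hc0 hcT]
    refine le_iInf fun hcov => ?_
    calc ν A ≤ ν (⋃ i, t i) := measure_mono hcov
      _ ≤ ∑' i, ν (t i) := measure_iUnion_le t
      _ ≤ ∑' i, c * StieltjesFunction.id.length (t i) :=
          ENNReal.tsum_le_tsum fun i => key_len (t i)
      _ = c * ∑' i, StieltjesFunction.id.length (t i) := ENNReal.tsum_mul_left
  -- Step 5: ν ≤ c • volume.restrict (Icc a b)
  have hg_mem : ∀ t ∈ Ioc (0:ℝ) T, g t ∈ Icc a b := by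
    intro t ht
    obtain ⟨hr1, hr2⟩ := hrange t
    constructor
    · show a ≤ t - h t
      rw [ha]; linarith [ht.1]
    · show t - h t ≤ b
      rw [hbdef]; linarith [ht.2]
  have hle : ν ≤ c • volume.restrict (Icc a b) := by
    refine Measure.le_iff.2 fun A hA => ?_
    have hAi : ν A = ν (A ∩ Icc a b) := by
      rw [hνapp _ hA, hνapp _ (hA.inter measurableSet_Icc)]
      congr 1
      ext t
      simp only [mem_inter_iff, mem_preimage]
      constructor
      · rintro ⟨h1, h2⟩; exact ⟨⟨h1, hg_mem t h2⟩, h2⟩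
      · rintro ⟨⟨h1, _⟩, h2⟩; exact ⟨h1, h2⟩
    rw [hAi, Measure.smul_apply, Measure.restrict_apply hA, smul_eq_mul]
    exact hset _
  -- The clamped version of φ
  set ψ : ℝ → ℝ := fun x => φ (max a (min x b)) with hψdef
  have hclamp : ∀ x, max a (min x b) ∈ Icc a b :=
    fun x => ⟨le_max_left _ _, max_le hab.le (min_le_right x b)⟩
  have hψcont : Continuous ψ :=
    hφcont.comp_continuous (continuous_const.max (continuous_id.min continuous_const)) hclamp
  have hψeq : ∀ x ∈ Icc a b, ψ x = φ x := by
    intro x hx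
    rw [hψdef]
    simp only
    rw [min_eq_left hx.2, max_eq_right hx.1]
  have hψnn : ∀ x, 0 ≤ ψ x := fun x => hφnonneg _ (hclamp x)
  obtain ⟨C, hC⟩ := (isCompact_Icc : IsCompact (Icc a b)).exists_bound_of_continuousOn hφcont
  have hψle : ∀ x, ψ x ≤ C := fun x => (le_abs_self _).trans (hC _ (hclamp x))
  have hFmeas : Measurable fun x => ENNReal.ofReal (ψ x) :=
    ENNReal.measurable_ofReal.comp hψcont.measurable
  have h0T : (0:ℝ) ≤ T := (hh'.trans hT).le
  -- Integral conversions
  have L1 : ∫ t in (0:ℝ)..T, φ (t - h t) = ∫ t in Ioc (0:ℝ) T, ψ (g t) := by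
    rw [intervalIntegral.integral_of_le h0T]
    refine setIntegral_congr_fun measurableSet_Ioc fun t ht => ?_
    exact (hψeq _ (hg_mem t ht)).symm
  have L2 : ∫ t in Ioc (0:ℝ) T, ψ (g t)
      = (∫⁻ t in Ioc (0:ℝ) T, ENNReal.ofReal (ψ (g t))).toReal :=
    integral_eq_lintegral_of_nonneg_ae (Filter.Eventually.of_forall fun t => hψnn _)
      (hψcont.measurable.comp hgm).aestronglyMeasurable
  have L3 : ∫⁻ t in Ioc (0:ℝ) T, ENNReal.ofReal (ψ (g t))
      = ∫⁻ x, ENNReal.ofReal (ψ x) ∂ν := by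
    rw [hν, lintegral_map hFmeas hgm]
  have L4 : ∫⁻ x, ENNReal.ofReal (ψ x) ∂ν ≤ c * ∫⁻ x in Icc a b, ENNReal.ofReal (ψ x) := by
    calc ∫⁻ x, ENNReal.ofReal (ψ x) ∂ν
        ≤ ∫⁻ x, ENNReal.ofReal (ψ x) ∂(c • volume.restrict (Icc a b)) :=
          lintegral_mono' hle le_rfl
      _ = c * ∫⁻ x in Icc a b, ENNReal.ofReal (ψ x) := lintegral_smul_measure c _
  have L5 : ∫⁻ x in Icc a b, ENNReal.ofReal (ψ x) = ∫⁻ x in Ioc a b, ENNReal.ofReal (ψ x) := by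
    rw [← Measure.restrict_congr_set Ioc_ae_eq_Icc]
  have hfin : ∫⁻ x in Ioc a b, ENNReal.ofReal (ψ x) ≠ ⊤ := by
    have : ∫⁻ x in Ioc a b, ENNReal.ofReal (ψ x) ≤ ENNReal.ofReal C * volume (Ioc a b) := by
      calc ∫⁻ x in Ioc a b, ENNReal.ofReal (ψ x)
          ≤ ∫⁻ _ in Ioc a b, ENNReal.ofReal C :=
            lintegral_mono fun x => ENNReal.ofReal_le_ofReal (hψle x)
        _ = ENNReal.ofReal C * volume (Ioc a b) := setLIntegral_const _ _
    refine ne_top_of_le_ne_top ?_ this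
    rw [Real.volume_Ioc]
    exact ENNReal.mul_ne_top ENNReal.ofReal_ne_top ENNReal.ofReal_ne_top
  have R1 : ∫ t in a..b, φ t = (∫⁻ x in Ioc a b, ENNReal.ofReal (ψ x)).toReal := by
    rw [intervalIntegral.integral_of_le hab.le,
      setIntegral_congr_fun measurableSet_Ioc
        (fun x hx => (hψeq x (Ioc_subset_Icc_self hx)).symm)]
    exact integral_eq_lintegral_of_nonneg_ae (Filter.Eventually.of_forall fun x => hψnn x)
      hψcont.aestronglyMeasurable.restrict
  calc ∫ t in (0:ℝ)..T, φ (t - h t)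
      = (∫⁻ x, ENNReal.ofReal (ψ x) ∂ν).toReal := by rw [L1, L2, L3]
    _ ≤ (c * ∫⁻ x in Ioc a b, ENNReal.ofReal (ψ x)).toReal := by
        refine ENNReal.toReal_mono (ENNReal.mul_ne_top hcT hfin) ?_
        rw [← L5]
        exact L4
    _ = hstar * ∫ t in a..b, φ t := by
        rw [ENNReal.toReal_mul, hcdef, ENNReal.toReal_ofReal hstar_pos.le, R1]
end

section
/- Under the assumptions of the delay-substitution lemma (existence of h* < ∞ with μ(I_{s,Δ}) ≤ h*·Δ asymptotically), the constant h* satisfies h* ≥ 1. -/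
open MeasureTheory Set Filter

/-!
Fix an admissible `Δ`. The sets `I_{-τ + kΔ, Δ}`, `k < N`, partition the set of `t ≥ 0` with
`t - h t ∈ [-τ, -τ + NΔ)`, which contains `[0, NΔ - τ + h')` because `h' ≤ h t ≤ τ`.
Hence `NΔ - (τ - h') ≤ N · hstar · Δ` for every large `N`, and letting `N → ∞` gives
`hstar ≥ 1`.
-/

lemma measure_inter_preimage_Ico_le_nsmul {α : Type*} [MeasurableSpace α] (μ : Measure α)
    (A : Set α) (g : α → ℝ) {s Δ : ℝ} (hΔ : 0 ≤ Δ) {c : ENNReal}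
    (hc : ∀ k : ℕ, μ (A ∩ g ⁻¹' Ico (s + k * Δ) (s + k * Δ + Δ)) ≤ c) (N : ℕ) :
    μ (A ∩ g ⁻¹' Ico s (s + N * Δ)) ≤ N • c := by
  induction N with
  | zero => simp
  | succ N ih =>
    have hsplit : Ico s (s + (N + 1 : ℕ) * Δ) =
        Ico s (s + N * Δ) ∪ Ico (s + N * Δ) (s + N * Δ + Δ) := by
      rw [Ico_union_Ico_eq_Ico (le_add_of_nonneg_right (by positivity)) (by linarith)]
      push_cast
      ring_nf
    calc μ (A ∩ g ⁻¹' Ico s (s + (N + 1 : ℕ) * Δ))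
        ≤ μ (A ∩ g ⁻¹' Ico s (s + N * Δ)) +
            μ (A ∩ g ⁻¹' Ico (s + N * Δ) (s + N * Δ + Δ)) := by
          rw [hsplit, preimage_union, inter_union_distrib_left]
          exact measure_union_le _ _
      _ ≤ N • c + c := add_le_add ih (hc N)
      _ = (N + 1) • c := (succ_nsmul c N).symm

lemma nonpos_of_eventually_natCast_mul_le {a b : ℝ} (h : ∀ᶠ n : ℕ in atTop, n * a ≤ b) :
    a ≤ 0 := by
  by_contra! ha
  obtain ⟨n, hn, hnb⟩ :=
    (((tendsto_natCast_atTop_atTop.atTop_mul_const ha).eventually_gt_atTop b).and h).exists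
  exact hnb.not_gt hn

theorem hstar_ge_one_general
    (h' τ hstar : ℝ) (h : ℝ → ℝ)
    (hrange : ∀ t, h t ∈ Set.Icc h' τ)
    (hbound : ∃ Δ₀ > 0, ∀ Δ : ℝ, 0 < Δ → Δ < Δ₀ → ∀ s : ℝ, -τ ≤ s →
      volume {t : ℝ | 0 ≤ t ∧ s ≤ t - h t ∧ t - h t < s + Δ} ≤ ENNReal.ofReal (hstar * Δ)) :
    1 ≤ hstar := by
  obtain ⟨Δ₀, hΔ₀, hb⟩ := hbound
  obtain ⟨Δ, hΔ, hΔΔ₀⟩ := exists_between hΔ₀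
  have hcount (N : ℕ) :
      ENNReal.ofReal (N * Δ - (τ - h')) ≤ ENNReal.ofReal (N * (hstar * Δ)) := by
    have hcover : Ico 0 (-τ + N * Δ + h') ⊆
        Ici 0 ∩ (fun t => t - h t) ⁻¹' Ico (-τ) (-τ + N * Δ) :=
      fun t ⟨ht0, htN⟩ => ⟨ht0, by linarith [(hrange t).2], by linarith [(hrange t).1]⟩
    calc ENNReal.ofReal (N * Δ - (τ - h')) = volume (Ico 0 (-τ + N * Δ + h')) := by
          rw [Real.volume_Ico]; ring_nf
      _ ≤ N • ENNReal.ofReal (hstar * Δ) :=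
          (measure_mono hcover).trans <| measure_inter_preimage_Ico_le_nsmul _ _ _ hΔ.le
            (fun k => hb Δ hΔ hΔΔ₀ _ (le_add_of_nonneg_right (by positivity))) N
      _ = ENNReal.ofReal (N * (hstar * Δ)) := by rw [← ENNReal.ofReal_nsmul, nsmul_eq_mul]
  have hlinear : ∀ᶠ N : ℕ in atTop, N * (Δ - hstar * Δ) ≤ τ - h' := by
    filter_upwards
      [(tendsto_natCast_atTop_atTop.atTop_mul_const hΔ).eventually_gt_atTop (τ - h')] with N hN
    have := (ENNReal.ofReal_le_ofReal_iff'.1 (hcount N)).resolve_right (by linarith)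
    linarith
  nlinarith [nonpos_of_eventually_natCast_mul_le hlinear]

/-- Under the assumptions of the delay-substitution lemma (the Lebesgue measure of
`I_{s,Δ} = {t ≥ 0 : t - h t ∈ [s, s+Δ)}` is at most `hstar * Δ` for all sufficiently
small `Δ > 0` and all `s ≥ -τ`), the constant `hstar` satisfies `hstar ≥ 1`. -/
theorem hstar_ge_one
    (h' τ hstar : ℝ) (h : ℝ → ℝ)
    (hh' : 0 < h') (hτ : h' ≤ τ)
    (hmeas : Measurable h)
    (hrange : ∀ t, h t ∈ Set.Icc h' τ)
    (hbound : ∃ Δ₀ > 0, ∀ Δ : ℝ, 0 < Δ → Δ < Δ₀ → ∀ s : ℝ, -τ ≤ s →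
      volume {t : ℝ | 0 ≤ t ∧ s ≤ t - h t ∧ t - h t < s + Δ} ≤ ENNReal.ofReal (hstar * Δ)) :
    1 ≤ hstar :=
  hstar_ge_one_general h' τ hstar h hrange hbound
end

section
/- Let λ > 0, C₁, C₂, C₃ ≥ 0, δ > 0, and let a : ℝ≥0 → ℝ≥0 satisfy e^{λt} a(t) ≤ C₁ + C₂ e^{λt}/λ + C₃ δ ∫₀^t e^{λs} a(v(s)) ds for all t ≥ 0, where v(s) = ⌊s/δ⌋ δ. If δ is small enough that e^{-λδ}(1 + α) < 1 with α := C₃ δ (e^{λδ} - 1)/λ, then sup_{t ≥ 0} a(t) < ∞; in particular a is bounded by C₁ + C₂/λ · (e^{λδ}-1)/(e^{λδ}-1-α) plus a term of order C₃ δ e^{λδ}/λ. -/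
open Real MeasureTheory

lemma gdd_integral_bound_aux (lam δ K : ℝ) (a : ℝ → ℝ) (hlam : 0 < lam) (hδ : 0 < δ)
    (ha : ∀ t, 0 ≤ a t) (hK : 0 ≤ K) (T : ℝ) (hT : 0 ≤ T)
    (hbd : ∀ s ∈ Set.Ioo (0:ℝ) T, a ((⌊s / δ⌋ : ℤ) * δ) ≤ K) :
    ∫ s in (0:ℝ)..T, Real.exp (lam * s) * a ((⌊s / δ⌋ : ℤ) * δ)
      ≤ K * ((Real.exp (lam * T) - 1) / lam) := by
  set f : ℝ → ℝ := fun s => Real.exp (lam * s) * a ((⌊s / δ⌋ : ℤ) * δ) with hf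
  have hfm : Measurable f := by
    have h1 : Measurable fun s : ℝ => (⌊s / δ⌋ : ℤ) := (measurable_id.div_const δ).floor
    have h2 : Measurable fun s : ℝ => a ((⌊s / δ⌋ : ℤ) * δ) :=
      (measurable_from_top (f := fun k : ℤ => a (k * δ))).comp h1
    exact ((Real.continuous_exp.comp (continuous_const.mul continuous_id)).measurable).mul h2
  have hmem : ∀ᵐ s ∂(volume.restrict (Set.Ioc 0 T)), s ∈ Set.Ioo 0 T := by
    have h1 := ae_restrict_mem (μ := volume) (measurableSet_Ioc (a := (0:ℝ)) (b := T))
    have hne : ∀ᵐ s : ℝ ∂volume, s ≠ T := by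
      refine (MeasureTheory.ae_iff).2 ?_
      simpa using Real.volume_singleton (a := T)
    filter_upwards [h1, ae_restrict_of_ae hne] with s hs hsne
    exact ⟨hs.1, lt_of_le_of_ne hs.2 hsne⟩
  have hfle : ∀ᵐ s ∂(volume.restrict (Set.Ioc 0 T)), f s ≤ K * Real.exp (lam * s) := by
    filter_upwards [hmem] with s hs
    have := hbd s hs
    calc f s ≤ Real.exp (lam * s) * K := by
          exact mul_le_mul_of_nonneg_left this (Real.exp_pos _).le
      _ = K * Real.exp (lam * s) := by ring
  have hgint : IntegrableOn (fun s => K * Real.exp (lam * s)) (Set.Ioc 0 T) := by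
    exact (continuous_const.mul (Real.continuous_exp.comp
      (continuous_const.mul continuous_id))).integrableOn_Ioc
  have hfint : IntegrableOn f (Set.Ioc 0 T) := by
    refine Integrable.mono' (g := fun _ => K * Real.exp (lam * T)) (integrable_const _)
      hfm.aestronglyMeasurable ?_
    filter_upwards [hmem] with s hs
    have h0 : 0 ≤ f s := mul_nonneg (Real.exp_pos _).le (ha _)
    rw [Real.norm_eq_abs, abs_of_nonneg h0]
    have : Real.exp (lam * s) ≤ Real.exp (lam * T) :=
      Real.exp_le_exp.2 (by nlinarith [hs.2] : lam * s ≤ lam * T)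
    calc f s ≤ Real.exp (lam * s) * K :=
          mul_le_mul_of_nonneg_left (hbd s hs) (Real.exp_pos _).le
      _ ≤ Real.exp (lam * T) * K := mul_le_mul_of_nonneg_right this hK
      _ = K * Real.exp (lam * T) := by ring
  have hmono : ∫ s in Set.Ioc (0:ℝ) T, f s ≤ ∫ s in Set.Ioc (0:ℝ) T, K * Real.exp (lam * s) :=
    setIntegral_mono_ae_restrict hfint hgint hfle
  have hcomp : ∫ s in (0:ℝ)..T, K * Real.exp (lam * s) = K * ((Real.exp (lam * T) - 1) / lam) := by
    rw [intervalIntegral.integral_const_mul]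
    have hderiv : ∀ x ∈ Set.uIcc (0:ℝ) T,
        HasDerivAt (fun x => Real.exp (lam * x) / lam) (Real.exp (lam * x)) x := by
      intro x _
      have h := ((Real.hasDerivAt_exp (lam * x)).comp x ((hasDerivAt_id x).const_mul lam))
      have h2 := h.div_const lam
      simpa [mul_comm, mul_div_assoc, mul_div_cancel_left₀ _ hlam.ne'] using h2
    rw [intervalIntegral.integral_eq_sub_of_hasDerivAt hderiv
      ((Real.continuous_exp.comp (continuous_const.mul continuous_id)).intervalIntegrable 0 T)]
    rw [mul_zero, Real.exp_zero]
    ring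
  rw [intervalIntegral.integral_of_le hT]
  calc ∫ s in Set.Ioc (0:ℝ) T, f s ≤ ∫ s in Set.Ioc (0:ℝ) T, K * Real.exp (lam * s) := hmono
    _ = ∫ s in (0:ℝ)..T, K * Real.exp (lam * s) := (intervalIntegral.integral_of_le hT).symm
    _ = K * ((Real.exp (lam * T) - 1) / lam) := hcomp

/-- Deterministic Gronwall-type lemma with discretized delay `v s = ⌊s/δ⌋ δ`:
if `e^{λt} a t ≤ C₁ + C₂ e^{λt}/λ + C₃ δ ∫₀^t e^{λs} a (v s) ds` for all `t ≥ 0`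
and `δ` is small enough that `e^{-λδ}(1+α) < 1` with `α = C₃ δ (e^{λδ}-1)/λ`,
then `a` is bounded, by `C₁ + (C₂/λ)·(e^{λδ}-1)/(e^{λδ}-1-α)` plus a term of order
`C₃ δ e^{λδ}/λ`. -/
theorem gronwall_discrete_delay
    (lam C₁ C₂ C₃ δ : ℝ) (a : ℝ → ℝ)
    (hlam : 0 < lam) (hC₁ : 0 ≤ C₁) (hC₂ : 0 ≤ C₂) (hC₃ : 0 ≤ C₃) (hδ : 0 < δ)
    (ha_nonneg : ∀ t, 0 ≤ a t)
    (hineq : ∀ t : ℝ, 0 ≤ t →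
      Real.exp (lam * t) * a t ≤ C₁ + C₂ * Real.exp (lam * t) / lam
        + C₃ * δ * ∫ s in (0:ℝ)..t, Real.exp (lam * s) * a ((⌊s / δ⌋ : ℤ) * δ))
    (hsmall : Real.exp (-(lam * δ)) * (1 + C₃ * δ * (Real.exp (lam * δ) - 1) / lam) < 1) :
    (∀ t : ℝ, 0 ≤ t →
      a t ≤ C₁ + C₂ / lam * (Real.exp (lam * δ) - 1)
              / (Real.exp (lam * δ) - 1 - C₃ * δ * (Real.exp (lam * δ) - 1) / lam)
            + (C₁ + C₂ / lam * (Real.exp (lam * δ) - 1)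
              / (Real.exp (lam * δ) - 1 - C₃ * δ * (Real.exp (lam * δ) - 1) / lam))
              * (C₃ * δ * Real.exp (lam * δ) / lam)) ∧
    BddAbove (Set.range fun t : {t : ℝ // 0 ≤ t} => a t) := by
  have hexpδ1 : 1 < Real.exp (lam * δ) := by
    have := Real.add_one_le_exp (lam * δ)
    have hpos : 0 < lam * δ := by positivity
    linarith
  set D : ℝ := Real.exp (lam * δ) - 1 with hDdef
  set α : ℝ := C₃ * δ * D / lam with hαdef
  set K : ℝ := C₁ + C₂ / lam * D / (D - α) with hKdef
  have hD : 0 < D := by rw [hDdef]; linarith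
  have h1α : 1 + α < Real.exp (lam * δ) := by
    have hep := Real.exp_pos (lam * δ)
    have h := hsmall
    rw [Real.exp_neg] at h
    have h2 := mul_lt_mul_of_pos_left h hep
    rwa [← mul_assoc, mul_inv_cancel₀ hep.ne', one_mul, mul_one] at h2
  have hDα : 0 < D - α := by linarith [hDdef.le, hDdef.ge]
  have hαnn : 0 ≤ α := by rw [hαdef]; positivity
  have hβ : C₃ * δ / lam < 1 := by
    have hαr : α = (C₃ * δ / lam) * D := by rw [hαdef]; ring
    nlinarith
  have hβnn : 0 ≤ C₃ * δ / lam := by positivity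
  have h1β : (0:ℝ) < 1 - C₃ * δ / lam := by linarith
  have hK1 : C₁ ≤ K := by
    have h0 : 0 ≤ C₂ / lam * D / (D - α) := by positivity
    rw [hKdef]; linarith
  have hKnn : 0 ≤ K := le_trans hC₁ hK1
  have hK2 : C₁ + C₂ / lam ≤ K := by
    have hr : (1:ℝ) ≤ D / (D - α) := by
      rw [le_div_iff₀ hDα]; linarith
    have h2 := mul_le_mul_of_nonneg_left hr (by positivity : 0 ≤ C₂ / lam)
    rw [hKdef]
    calc C₁ + C₂ / lam = C₁ + C₂ / lam * 1 := by ring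
      _ ≤ C₁ + C₂ / lam * (D / (D - α)) := by linarith
      _ = C₁ + C₂ / lam * D / (D - α) := by ring
  have hDα2 : D - α = D * (1 - C₃ * δ / lam) := by rw [hαdef]; ring
  have hKalt : K = C₁ + (C₂ / lam) / (1 - C₃ * δ / lam) := by
    rw [hKdef, hDα2]
    congr 1
    rw [mul_comm (C₂ / lam) D, mul_div_mul_left _ _ hD.ne']
  have hKid : (1 - C₃ * δ / lam) * K = C₁ * (1 - C₃ * δ / lam) + C₂ / lam := by
    have hlt : C₃ * δ < lam := (div_lt_one hlam).mp hβ
    have hne : lam - C₃ * δ ≠ 0 := by linarith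
    rw [hKalt]
    field_simp
  clear_value D α K
  clear hKdef hαdef hDdef hsmall
  -- grid bound
  have grid : ∀ n : ℕ, a ((n : ℝ) * δ) ≤ K := by
    intro n
    induction n using Nat.strong_induction_on with
    | _ n ih =>
      have hT : 0 ≤ (n : ℝ) * δ := by positivity
      have hbd : ∀ s ∈ Set.Ioo (0:ℝ) ((n:ℝ) * δ), a ((⌊s / δ⌋ : ℤ) * δ) ≤ K := by
        intro s hs
        have h0 : (0:ℤ) ≤ ⌊s / δ⌋ := Int.floor_nonneg.2 (div_nonneg hs.1.le hδ.le)
        have h1 : ⌊s / δ⌋ < (n : ℤ) := by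
          rw [Int.floor_lt]
          push_cast
          rw [div_lt_iff₀ hδ]
          exact hs.2
        obtain ⟨m, hm⟩ := Int.eq_ofNat_of_zero_le h0
        have hmn : m < n := by rw [hm] at h1; exact_mod_cast h1
        have hKm := ih m hmn
        rw [hm]
        exact_mod_cast hKm
      have hI := gdd_integral_bound_aux lam δ K a hlam hδ ha_nonneg hKnn ((n:ℝ) * δ) hT hbd
      have h := hineq ((n:ℝ) * δ) hT
      set E : ℝ := Real.exp (lam * ((n:ℝ) * δ)) with hEdef
      have hE1 : 1 ≤ E := Real.one_le_exp (by positivity)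
      have hEpos : 0 < E := Real.exp_pos _
      have hrw1 : C₃ * δ * (K * ((E - 1) / lam)) = (C₃ * δ / lam) * (K * (E - 1)) := by ring
      have hrw2 : C₂ * E / lam = (C₂ / lam) * E := by ring
      have hP1 : (1 - C₃ * δ / lam) * K * (E - 1)
          = (C₁ * (1 - C₃ * δ / lam) + C₂ / lam) * (E - 1) := by rw [hKid]
      have hP2 : 0 ≤ C₁ * (1 - C₃ * δ / lam) * (E - 1) :=
        mul_nonneg (mul_nonneg hC₁ h1β.le) (by linarith)
      have hP3 : 0 ≤ (C₃ * δ / lam) * (K - C₁) := mul_nonneg hβnn (by linarith)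
      have hfin : C₁ + C₂ * E / lam + C₃ * δ * (K * ((E - 1) / lam)) ≤ K * E := by
        rw [hrw1, hrw2]
        nlinarith [hP1, hP2, hP3]
      have hEa : E * a ((n:ℝ) * δ) ≤ K * E := by
        calc E * a ((n:ℝ) * δ) ≤ C₁ + C₂ * E / lam
              + C₃ * δ * ∫ s in (0:ℝ)..((n:ℝ)*δ), Real.exp (lam * s) * a ((⌊s / δ⌋ : ℤ) * δ) := h
          _ ≤ C₁ + C₂ * E / lam + C₃ * δ * (K * ((E - 1) / lam)) := by
              have := mul_le_mul_of_nonneg_left hI (by positivity : (0:ℝ) ≤ C₃ * δ)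
              linarith
          _ ≤ K * E := hfin
      exact le_of_mul_le_mul_left (by linarith : E * a ((n:ℝ) * δ) ≤ E * K) hEpos
  -- general bound
  have bound : ∀ t : ℝ, 0 ≤ t → a t ≤ C₁ + C₂ / lam + K * (C₃ * δ / lam) := by
    intro t ht
    have hbd : ∀ s ∈ Set.Ioo (0:ℝ) t, a ((⌊s / δ⌋ : ℤ) * δ) ≤ K := by
      intro s hs
      have h0 : (0:ℤ) ≤ ⌊s / δ⌋ := Int.floor_nonneg.2 (div_nonneg hs.1.le hδ.le)
      obtain ⟨m, hm⟩ := Int.eq_ofNat_of_zero_le h0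
      have hKm := grid m
      rw [hm]
      exact_mod_cast hKm
    have hI := gdd_integral_bound_aux lam δ K a hlam hδ ha_nonneg hKnn t ht hbd
    have h := hineq t ht
    set E : ℝ := Real.exp (lam * t) with hEdef
    have hE1 : 1 ≤ E := Real.one_le_exp (by positivity)
    have hEpos : 0 < E := Real.exp_pos _
    have hrw1 : C₃ * δ * (K * ((E - 1) / lam)) = (C₃ * δ / lam) * (K * (E - 1)) := by ring
    have hEa : E * a t ≤ E * (C₁ + C₂ / lam + K * (C₃ * δ / lam)) := by
      have h2 : E * a t ≤ C₁ + C₂ * E / lam + C₃ * δ * (K * ((E - 1) / lam)) := by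
        have := mul_le_mul_of_nonneg_left hI (by positivity : (0:ℝ) ≤ C₃ * δ)
        linarith
      rw [hrw1] at h2
      have h3 : 0 ≤ C₃ * δ / lam * K := mul_nonneg hβnn hKnn
      have h4 : 0 ≤ C₁ * (E - 1) := mul_nonneg hC₁ (by linarith)
      ring_nf at h2 h3 h4 ⊢
      linarith [h2, h3, h4]
    exact le_of_mul_le_mul_left hEa hEpos
  have hfinal : ∀ t : ℝ, 0 ≤ t → a t ≤ K + K * (C₃ * δ * Real.exp (lam * δ) / lam) := by
    intro t ht
    have h := bound t ht
    have hmul : K * (C₃ * δ / lam) ≤ K * (C₃ * δ * Real.exp (lam * δ) / lam) := by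
      apply mul_le_mul_of_nonneg_left _ hKnn
      rw [div_le_div_iff_of_pos_right]
      · nlinarith [mul_nonneg hC₃ hδ.le]
      · exact hlam
    linarith
  refine ⟨fun t ht => hfinal t ht, ⟨K + K * (C₃ * δ * Real.exp (lam * δ) / lam), ?_⟩⟩
  rintro x ⟨⟨t, ht⟩, rfl⟩
  exact hfinal t ht
end

section
/- Let λ > 0, δ > 0, α := C₃ δ (e^{λδ} - 1)/λ with C₃ ≥ 0. Define a sequence (a_k) of nonnegative reals by a_k = e^{-kλδ} b_k where b_k ≤ C₁ + (C₂/λ) e^{kλδ} + α ∑_{i=0}^{k-1} (C₁ + (C₂/λ) e^{iλδ})(1+α)^{k-1-i} for constants C₁, C₂ ≥ 0. If e^{-λδ}(1+α) < 1, then for all k, a_k ≤ C₁ + (C₂/λ) · (e^{λδ} - 1)/(e^{λδ} - 1 - α), so (a_k) is uniformly bounded. -/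
/-! With `E = e^{λδ}`, the two sums in the bound on `b k` are geometric: `α ∑ (1 + α)^{k-1-i} = (1 + α)^k - 1`
and `∑ E^i (1 + α)^{k-1-i} = (E^k - (1 + α)^k) / (E - 1 - α)`. Since `1 + α < E`, replacing `(1 + α)^k` by
`E^k` only weakens the bound, which becomes `E^k (C₁ + (C₂/λ)(E - 1)/(E - 1 - α))`; the factor `e^{-kλδ}`
cancels `E^k`. -/

open Finset

theorem mul_sum_range_pow_sub_one_sub {R : Type*} [CommRing R] (α : R) (k : ℕ) :
    α * ∑ i ∈ range k, (1 + α) ^ (k - 1 - i) = (1 + α) ^ k - 1 := by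
  rw [sum_range_reflect (fun i => (1 + α) ^ i) k, mul_comm, ← geom_sum_mul, add_sub_cancel_left]

theorem sum_range_pow_mul_pow_sub_one_sub {K : Type*} [Field K] {x y : K} (hxy : x ≠ y) (k : ℕ) :
    ∑ i ∈ range k, x ^ i * y ^ (k - 1 - i) = (x ^ k - y ^ k) / (x - y) := by
  rw [eq_div_iff (sub_ne_zero.2 hxy), geom_sum₂_mul]

theorem add_mul_sum_range_pow_le {K : Type*} [Field K] [LinearOrder K] [IsStrictOrderedRing K]
    {C₁ c α E : K} (hC₁ : 0 ≤ C₁) (hc : 0 ≤ c) (hα : 0 ≤ α) (hαE : 1 + α < E) (k : ℕ) :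
    C₁ + c * E ^ k + α * ∑ i ∈ range k, (C₁ + c * E ^ i) * (1 + α) ^ (k - 1 - i)
      ≤ E ^ k * (C₁ + c * (E - 1) / (E - 1 - α)) := by
  have hD : 0 < E - 1 - α := by linarith
  have hqE : (1 + α) ^ k ≤ E ^ k := pow_le_pow_left₀ (by linarith) hαE.le k
  have hsplit : ∑ i ∈ range k, (C₁ + c * E ^ i) * (1 + α) ^ (k - 1 - i)
      = C₁ * ∑ i ∈ range k, (1 + α) ^ (k - 1 - i)
        + c * ∑ i ∈ range k, E ^ i * (1 + α) ^ (k - 1 - i) := by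
    simp only [add_mul, sum_add_distrib, mul_sum, mul_assoc]
  have hconv := sum_range_pow_mul_pow_sub_one_sub hαE.ne' k
  rw [sub_add_eq_sub_sub] at hconv
  calc C₁ + c * E ^ k + α * ∑ i ∈ range k, (C₁ + c * E ^ i) * (1 + α) ^ (k - 1 - i)
      = C₁ * (1 + α) ^ k + c * E ^ k + c * α * (E ^ k - (1 + α) ^ k) / (E - 1 - α) := by
        rw [hsplit, mul_add, mul_left_comm, mul_sum_range_pow_sub_one_sub, hconv]
        ring
    _ ≤ C₁ * E ^ k + c * E ^ k + c * α * E ^ k / (E - 1 - α) := by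
        gcongr
        exact sub_le_self _ (by positivity)
    _ = E ^ k * (C₁ + c * (E - 1) / (E - 1 - α)) := by
        field_simp
        ring

theorem discrete_sequence_bound_general
    (lam δ C₁ C₂ C₃ : ℝ) (a b : ℕ → ℝ)
    (hlam : 0 < lam) (hδ : 0 < δ) (hC₁ : 0 ≤ C₁) (hC₂ : 0 ≤ C₂) (hC₃ : 0 ≤ C₃)
    (ha : ∀ k : ℕ, a k = Real.exp (-(k * lam * δ)) * b k)
    (hb : ∀ k : ℕ, b k ≤ C₁ + C₂ / lam * Real.exp (k * lam * δ)
      + (C₃ * δ * (Real.exp (lam * δ) - 1) / lam) *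
        ∑ i ∈ Finset.range k,
          (C₁ + C₂ / lam * Real.exp (i * lam * δ))
            * (1 + C₃ * δ * (Real.exp (lam * δ) - 1) / lam) ^ (k - 1 - i))
    (hsmall : Real.exp (-(lam * δ)) * (1 + C₃ * δ * (Real.exp (lam * δ) - 1) / lam) < 1) :
    ∀ k : ℕ, a k ≤ C₁ + C₂ / lam * (Real.exp (lam * δ) - 1)
      / (Real.exp (lam * δ) - 1 - C₃ * δ * (Real.exp (lam * δ) - 1) / lam) := by
  intro k
  set E := Real.exp (lam * δ)
  set α := C₃ * δ * (E - 1) / lam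
  have hE : 1 < E := Real.one_lt_exp_iff.2 (mul_pos hlam hδ)
  have hα : 0 ≤ α := div_nonneg (mul_nonneg (mul_nonneg hC₃ hδ.le) (sub_nonneg.2 hE.le)) hlam.le
  have hαE : 1 + α < E := by
    rwa [Real.exp_neg, inv_mul_lt_iff₀ (Real.exp_pos _), mul_one] at hsmall
  have hexp (n : ℕ) : Real.exp (n * lam * δ) = E ^ n := by rw [mul_assoc, Real.exp_nat_mul]
  have hbk := hb k
  simp only [hexp] at hbk
  rw [ha k, Real.exp_neg, hexp, inv_mul_le_iff₀ (by positivity)]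
  exact hbk.trans (add_mul_sum_range_pow_le hC₁ (div_nonneg hC₂ hlam.le) hα hαE k)

/-- Discrete core of the boundedness lemma: if `a k = e^{-kλδ} b k` with
`b k ≤ C₁ + (C₂/λ) e^{kλδ} + α ∑_{i<k} (C₁ + (C₂/λ) e^{iλδ}) (1+α)^{k-1-i}`,
`α = C₃ δ (e^{λδ}-1)/λ`, and `e^{-λδ}(1+α) < 1`, then
`a k ≤ C₁ + (C₂/λ)·(e^{λδ}-1)/(e^{λδ}-1-α)` for all `k`. -/
theorem discrete_sequence_bound
    (lam δ C₁ C₂ C₃ : ℝ) (a b : ℕ → ℝ)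
    (hlam : 0 < lam) (hδ : 0 < δ) (hC₁ : 0 ≤ C₁) (hC₂ : 0 ≤ C₂) (hC₃ : 0 ≤ C₃)
    (ha_nonneg : ∀ k, 0 ≤ a k)
    (ha : ∀ k : ℕ, a k = Real.exp (-(k * lam * δ)) * b k)
    (hb : ∀ k : ℕ, b k ≤ C₁ + C₂ / lam * Real.exp (k * lam * δ)
      + (C₃ * δ * (Real.exp (lam * δ) - 1) / lam) *
        ∑ i ∈ Finset.range k,
          (C₁ + C₂ / lam * Real.exp (i * lam * δ))
            * (1 + C₃ * δ * (Real.exp (lam * δ) - 1) / lam) ^ (k - 1 - i))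
    (hsmall : Real.exp (-(lam * δ)) * (1 + C₃ * δ * (Real.exp (lam * δ) - 1) / lam) < 1) :
    ∀ k : ℕ, a k ≤ C₁ + C₂ / lam * (Real.exp (lam * δ) - 1)
      / (Real.exp (lam * δ) - 1 - C₃ * δ * (Real.exp (lam * δ) - 1) / lam) :=
  discrete_sequence_bound_general lam δ C₁ C₂ C₃ a b hlam hδ hC₁ hC₂ hC₃ ha hb hsmall
end
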